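/- A hypergraph G is β-acyclic if and only if its nest-set width nsw(G) equals 1. -/

import Mathlib

open Finset

/-- `N` is a nest-set of the hypergraph with edge set `E`: the family
`{e \ N : e ∈ E, e ∩ N ≠ ∅}` is totally ordered by inclusion. -/
def IsNestSet {V : Type*} [DecidableEq V] (E : Finset (Finset V)) (N : Finset V) : Prop :=
  ∀ e₁ ∈ E, ∀ e₂ ∈ E, (e₁ ∩ N).Nonempty → (e₂ ∩ N).Nonempty →
    e₁ \ N ⊆ e₂ \ N ∨ e₂ \ N ⊆ e₁ \ N

/-- `v` is a nest point: the edges containing `v` are totally ordered by inclusion. -/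
def IsNestPoint {V : Type*} (E : Finset (Finset V)) (v : V) : Prop :=
  ∀ e₁ ∈ E, ∀ e₂ ∈ E, v ∈ e₁ → v ∈ e₂ → e₁ ⊆ e₂ ∨ e₂ ⊆ e₁

/-- The edge set of the hypergraph `G - N`. -/
def hreduce {V : Type*} [DecidableEq V] (E : Finset (Finset V)) (N : Finset V) :
    Finset (Finset V) :=
  (E.image (fun e => e \ N)).filter (fun e => 2 ≤ e.card)

/-- `gap(G, N) = max { |N| - |e ∩ N| : e ∈ E, e ∩ N ≠ ∅ }`. -/
def hgap {V : Type*} [DecidableEq V] (E : Finset (Finset V)) (N : Finset V) : ℕ :=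
  (E.filter (fun e => (e ∩ N).Nonempty)).sup (fun e => N.card - (e ∩ N).card)

/-- `L = N₁, …, N_t` is a nest-set elimination order of the hypergraph with node set `Vs`
and edge set `E`. -/
def IsElimOrder {V : Type*} [DecidableEq V] (Vs : Finset V) (E : Finset (Finset V))
    (L : List (Finset V)) : Prop :=
  L.Pairwise Disjoint ∧ (∀ N ∈ L, N.Nonempty) ∧ L.foldr (· ∪ ·) ∅ = Vs ∧
  ∀ i : Fin L.length, IsNestSet ((L.take i).foldl hreduce E) (L.get i)

/-- The nest-set width of an elimination order: maximum cardinality of an element. -/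
def nswOf {V : Type*} (L : List (Finset V)) : ℕ := (L.map Finset.card).foldr max 0

/-- The nest-set gap of an elimination order: max over `i` of
`gap(G - N₁ - ⋯ - N_{i-1}, N_i)`. -/
def nsgOf {V : Type*} [DecidableEq V] (E : Finset (Finset V)) (L : List (Finset V)) : ℕ :=
  ((List.range L.length).map
    (fun i => hgap ((L.take i).foldl hreduce E) (L.getD i ∅))).foldr max 0

/-- A β-cycle `v₀, e₀, v₁, e₁, …, v_{ℓ-1}, e_{ℓ-1}, v₀` of length `ℓ = l + 3 ≥ 3` in the
hypergraph with edge set `E`: distinct nodes, distinct edges, and `v i` belongs to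
`e (i-1)`, `e i` and to no other `e j` (indices cyclic in `Fin (l + 3)`). -/
def IsBetaCycle {V : Type*} (E : Finset (Finset V)) (l : ℕ)
    (v : Fin (l + 3) → V) (e : Fin (l + 3) → Finset V) : Prop :=
  Function.Injective v ∧ Function.Injective e ∧ (∀ i, e i ∈ E) ∧
  ∀ i j, v i ∈ e j ↔ (j = i ∨ j + 1 = i)

/-- A hypergraph `G` is β-acyclic if it contains no β-cycle. -/
def BetaAcyclic {V : Type*} (E : Finset (Finset V)) : Prop :=
  ¬ ∃ (l : ℕ) (v : Fin (l + 3) → V) (e : Fin (l + 3) → Finset V), IsBetaCycle E l v e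

/-!
A nest point lies on no β-cycle, so deleting it maps β-cycles to β-cycles, while deleting nodes
never creates β-cycles. Hence the theorem amounts to the existence of a nest point in every
β-acyclic hypergraph, proved in the Dirac-type form: if `E + S` is β-acyclic, some node outside
`S` is a nest point. An edge `f ⊄ S` whose trace `f ∩ S` is maximal can be added to `S`. Indeed,
a β-cycle through `S ∪ f` entering it in `f \ S` and leaving it in `S \ f` yields a β-path
outside `S` from `f` to a node of `S`; every edge along it contains `f ∩ S`, as otherwise a
β-cycle of `E + S` appears, so the last edge would have a larger trace.
-/

namespace Fin

theorem add_one_eq_iff_val {l : ℕ} {i j : Fin (l + 3)} :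
    j + 1 = i ↔ j.val + 1 = i.val ∨ (j.val = l + 2 ∧ i.val = 0) := by
  rw [Fin.ext_iff, Fin.val_add_one]
  split_ifs with h <;> rw [Fin.ext_iff, Fin.val_last] at h <;> omega

theorem add_one_ne {l : ℕ} (i : Fin (l + 3)) : i + 1 ≠ i := by
  rw [Ne, add_one_eq_iff_val]; omega

theorem add_one_add_one_ne {l : ℕ} (i : Fin (l + 3)) : i + 1 + 1 ≠ i := by
  rw [Ne, add_one_eq_iff_val, Fin.val_add_one]
  split_ifs with h <;> rw [Fin.ext_iff, Fin.val_last] at h <;> omega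

end Fin

section

variable {V : Type*} {E F : Finset (Finset V)} {l : ℕ} {v : Fin (l + 3) → V}
  {e : Fin (l + 3) → Finset V}

theorem BetaAcyclic.mono (h : E ⊆ F) (hF : BetaAcyclic F) : BetaAcyclic E :=
  fun ⟨l, v, e, hv, he, hmem, hve⟩ => hF ⟨l, v, e, hv, he, fun i => h (hmem i), hve⟩

theorem IsBetaCycle.of_mem_iff (hmem : ∀ i, e i ∈ E)
    (hve : ∀ i j, v i ∈ e j ↔ j = i ∨ j + 1 = i) : IsBetaCycle E l v e := by
  refine ⟨fun i j hij => ?_, fun i j hij => ?_, hmem, hve⟩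
  · rcases (hve j i).1 (hij ▸ (hve i i).2 (Or.inl rfl)) with h | rfl
    · exact h
    rcases (hve i (i + 1)).1 (hij ▸ (hve (i + 1) (i + 1)).2 (Or.inl rfl)) with h | h
    · exact absurd h (Fin.add_one_ne i)
    · exact absurd h (Fin.add_one_add_one_ne i)
  · rcases (hve i j).1 (hij ▸ (hve i i).2 (Or.inl rfl)) with rfl | rfl
    · rfl
    rcases (hve (j + 1 + 1) j).1 (hij ▸ (hve (j + 1 + 1) (j + 1)).2 (Or.inr rfl)) with h | h
    · exact absurd h.symm (Fin.add_one_add_one_ne j)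
    · exact absurd (add_right_cancel h).symm (Fin.add_one_ne j)

theorem IsBetaCycle.mem (h : IsBetaCycle E l v e) (i : Fin (l + 3)) : e i ∈ E := h.2.2.1 i

theorem IsBetaCycle.mem_iff (h : IsBetaCycle E l v e) (i j : Fin (l + 3)) :
    v i ∈ e j ↔ j = i ∨ j + 1 = i :=
  h.2.2.2 i j

theorem IsBetaCycle.mem_self (h : IsBetaCycle E l v e) (i : Fin (l + 3)) : v i ∈ e i :=
  (h.mem_iff i i).2 (Or.inl rfl)

theorem IsBetaCycle.mem_succ (h : IsBetaCycle E l v e) (i : Fin (l + 3)) : v (i + 1) ∈ e i :=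
  (h.mem_iff (i + 1) i).2 (Or.inr rfl)

theorem IsBetaCycle.of_mem (h : IsBetaCycle E l v e) (hF : ∀ i, e i ∈ F) :
    IsBetaCycle F l v e :=
  .of_mem_iff hF h.mem_iff

theorem IsBetaCycle.mem_of_insert [DecidableEq V] {X : Finset V}
    (h : IsBetaCycle (insert X E) l v e) {i : Fin (l + 3)} (hi : e i ≠ X) : e i ∈ E :=
  (Finset.mem_insert.1 (h.mem i)).resolve_left hi

theorem IsBetaCycle.mem_of_insert_of_eq_zero [DecidableEq V] {X : Finset V}
    (h : IsBetaCycle (insert X E) l v e) (h0 : e 0 = X) {i : Fin (l + 3)} (hi : i ≠ 0) :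
    e i ∈ E :=
  h.mem_of_insert fun hX => hi (h.2.1 (hX.trans h0.symm))

theorem IsBetaCycle.rotate (h : IsBetaCycle E l v e) (k : Fin (l + 3)) :
    IsBetaCycle E l (fun i => v (i + k)) (fun i => e (i + k)) :=
  .of_mem_iff (fun i => h.mem _) fun i j => by rw [h.mem_iff]; grind

/-- Reflected so that `v 0` and `v 1` are exchanged and `e 0` stays in place. -/
theorem IsBetaCycle.reflect (h : IsBetaCycle E l v e) :
    IsBetaCycle E l (fun i => v (1 - i)) (fun i => e (-i)) :=
  .of_mem_iff (fun i => h.mem _) fun i j => by rw [h.mem_iff]; grind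

theorem IsBetaCycle.update_zero {T : Finset V} (h : IsBetaCycle E l v e)
    (hT : T ⊆ e 0) (h0 : v 0 ∈ T) (h1 : v 1 ∈ T) (hF : ∀ i, Function.update e 0 T i ∈ F) :
    IsBetaCycle F l v (Function.update e 0 T) := by
  refine .of_mem_iff hF fun i j => ?_
  rcases eq_or_ne j 0 with rfl | hj
  · rw [Function.update_self]
    refine ⟨fun hi => (h.mem_iff i 0).1 (hT hi), ?_⟩
    rintro (rfl | rfl)
    · exact h0
    · rwa [zero_add]
  · rw [Function.update_of_ne hj, h.mem_iff]

theorem IsNestPoint.ne_vertex {x : V} (hx : IsNestPoint E x) (hc : IsBetaCycle E l v e)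
    (i : Fin (l + 3)) : v i ≠ x := by
  rintro rfl
  obtain ⟨j, rfl⟩ : ∃ j, j + 1 = i := ⟨i - 1, sub_add_cancel i 1⟩
  rcases hx _ (hc.mem j) _ (hc.mem (j + 1)) (hc.mem_succ j) (hc.mem_self _) with h | h
  · rcases (hc.mem_iff _ _).1 (h (hc.mem_self j)) with h' | h'
    · exact Fin.add_one_ne j h'
    · exact Fin.add_one_add_one_ne j h'
  · rcases (hc.mem_iff _ _).1 (h (hc.mem_succ (j + 1))) with h' | h'
    · exact Fin.add_one_add_one_ne j h'.symm
    · exact Fin.add_one_ne j (add_right_cancel h').symm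

theorem not_betaAcyclic_of_triangle {a b c : Finset V} {x y z : V}
    (ha : a ∈ E) (hb : b ∈ E) (hc : c ∈ E) (hxa : x ∈ a) (hxb : x ∈ b) (hxc : x ∉ c)
    (hyb : y ∈ b) (hyc : y ∈ c) (hya : y ∉ a) (hzc : z ∈ c) (hza : z ∈ a) (hzb : z ∉ b) :
    ¬ BetaAcyclic E := fun hA =>
  hA ⟨0, ![x, y, z], ![b, c, a], .of_mem_iff (fun i => by fin_cases i <;> assumption)
    fun i j => by fin_cases i <;> fin_cases j <;> simp [*]⟩

/-- `g 0, w 1, g 1, …, w n, g n` is a β-path: among the edges `g 0, …, g n`, the node `w i`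
lies exactly in `g (i - 1)` and `g i`. The values `w 0` and `g i`, `w i` for `i > n` play no
role. -/
def IsBetaPath (n : ℕ) (g : ℕ → Finset V) (w : ℕ → V) : Prop :=
  ∀ i, 0 < i → i ≤ n → ∀ j ≤ n, (w i ∈ g j ↔ j = i ∨ j + 1 = i)

namespace IsBetaPath

variable {n : ℕ} {g : ℕ → Finset V} {w : ℕ → V}

theorem mono (h : IsBetaPath n g w) {m : ℕ} (hm : m ≤ n) : IsBetaPath m g w :=
  fun i hi hin j hj => h i hi (hin.trans hm) j (hj.trans hm)

theorem tail (h : IsBetaPath (n + 1) g w) :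
    IsBetaPath n (fun i => g (i + 1)) (fun i => w (i + 1)) := fun i hi hin j hj => by
  rw [h (i + 1) (by omega) (by omega) (j + 1) (by omega)]
  omega

theorem update_zero (h : IsBetaPath n g w) {f : Finset V} (hf : f ⊆ g 0)
    (hw : w 1 ∈ f) : IsBetaPath n (Function.update g 0 f) w := fun i hi hin j hj => by
  rcases eq_or_ne j 0 with rfl | hj0
  · rw [Function.update_self]
    refine ⟨fun hwi => (h i hi hin 0 hj).1 (hf hwi), ?_⟩
    rintro (rfl | rfl)
    · omega
    · exact hw
  · rw [Function.update_of_ne hj0, h i hi hin j hj]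

theorem snoc (hp : IsBetaPath n g w) {h : Finset V} {t : V}
    (ht : ∀ j ≤ n, t ∈ g j ↔ j = n) (hth : t ∈ h) (hwh : ∀ i, 0 < i → i ≤ n → w i ∉ h) :
    IsBetaPath (n + 1) (fun i => if i ≤ n then g i else h)
      (fun i => if i ≤ n then w i else t) := fun i hi hin j hj => by
  by_cases hin' : i ≤ n <;> by_cases hjn : j ≤ n <;> simp only [hin', hjn, if_true, if_false]
  · rw [hp i hi hin' j hjn]
  · simp only [hwh i hi hin', false_iff]
    omega
  · rw [ht j hjn]
    omega
  · simp only [hth, true_iff]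
    omega

end IsBetaPath

open Fin.NatCast in
theorem IsBetaCycle.isBetaPath (h : IsBetaCycle E l v e) :
    IsBetaPath (l + 2) (fun i => e i) (fun i => v i) ∧
      ∀ j ≤ l + 2, v 0 ∈ e j ↔ j = 0 ∨ j = l + 2 := by
  have hval : ∀ i ≤ l + 2, ((i : Fin (l + 3)) : ℕ) = i := fun i hi =>
    Nat.mod_eq_of_lt (by omega)
  refine ⟨fun i hi hin j hj => ?_, fun j hj => ?_⟩
  · rw [h.mem_iff, Fin.add_one_eq_iff_val, Fin.ext_iff, hval i hin, hval j hj]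
    omega
  · rw [← Nat.cast_zero, h.mem_iff, Fin.add_one_eq_iff_val, Fin.ext_iff, hval 0 (by omega),
      hval j hj]
    omega

theorem not_betaAcyclic_of_isBetaPath {n : ℕ} {g : ℕ → Finset V} {w : ℕ → V} {x : V}
    (hp : IsBetaPath n g w) (hn : 2 ≤ n) (hE : ∀ i ≤ n, g i ∈ E)
    (hx : ∀ j ≤ n, x ∈ g j ↔ j = 0 ∨ j = n) : ¬ BetaAcyclic E := by
  obtain ⟨l, rfl⟩ : ∃ l, n = l + 2 := ⟨n - 2, by omega⟩
  refine fun hA => hA ⟨l, fun i => if (i : ℕ) = 0 then x else w i, fun i => g i,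
    .of_mem_iff (fun i => hE i (by omega)) fun i j => ?_⟩
  rw [Fin.add_one_eq_iff_val, Fin.ext_iff]
  split_ifs with hi
  · rw [hx j (by omega)]
    omega
  · rw [hp i (by omega) (by omega) j (by omega)]
    omega

variable [DecidableEq V] {S T f : Finset V}

theorem mem_hreduce {N e' : Finset V} :
    e' ∈ hreduce E N ↔ (∃ e ∈ E, e \ N = e') ∧ 2 ≤ e'.card := by
  simp [hreduce]

theorem subset_sdiff_of_mem_hreduce {Vs N : Finset V} (hEV : ∀ e ∈ E, e ⊆ Vs) :
    ∀ e ∈ hreduce E N, e ⊆ Vs \ N := fun _ he => by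
  obtain ⟨⟨e₀, he₀, rfl⟩, -⟩ := mem_hreduce.1 he
  exact sdiff_subset_sdiff_left _ (hEV e₀ he₀)

theorem BetaAcyclic.hreduce (hA : BetaAcyclic E) (N : Finset V) :
    BetaAcyclic (hreduce E N) := by
  rintro ⟨l, v, e, hc⟩
  choose f hf hfe using fun i => (mem_hreduce.1 (hc.mem i)).1
  have hvN : ∀ i, v i ∉ N := fun i => (mem_sdiff.1 (hfe i ▸ hc.mem_self i)).2
  refine hA ⟨l, v, f, .of_mem_iff hf fun i j => ?_⟩
  rw [← hc.mem_iff, ← hfe, mem_sdiff, and_iff_left (hvN i)]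

theorem IsNestPoint.betaAcyclic_of_hreduce {x : V} (hx : IsNestPoint E x)
    (hA : BetaAcyclic (hreduce E {x})) : BetaAcyclic E := by
  rintro ⟨l, v, e, hc⟩
  have hvx : ∀ i, v i ∉ ({x} : Finset V) := fun i => by simpa using hx.ne_vertex hc i
  refine hA ⟨l, v, fun i => e i \ {x},
    .of_mem_iff (fun i => mem_hreduce.2 ⟨⟨e i, hc.mem i, rfl⟩, ?_⟩)
    fun i j => by rw [mem_sdiff, and_iff_left (hvx i), hc.mem_iff]⟩
  have hne : v i ≠ v (i + 1) := fun h => Fin.add_one_ne i (hc.1 h).symm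
  calc 2 = ({v i, v (i + 1)} : Finset V).card := (card_pair hne).symm
    _ ≤ (e i \ {x}).card := card_le_card (by
      simp [insert_subset_iff, mem_sdiff, hc.mem_self, hc.mem_succ, hvx])

theorem isNestSet_singleton_iff {x : V} : IsNestSet E {x} ↔ IsNestPoint E x := by
  have hne : ∀ a : Finset V, (a ∩ {x}).Nonempty ↔ x ∈ a := fun a => by
    simp [Finset.Nonempty]
  have hsdiff : ∀ {a b : Finset V}, x ∈ b → (a \ {x} ⊆ b \ {x} ↔ a ⊆ b) := fun hb =>
    ⟨fun h y hy => by
      by_cases hyx : y = x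
      · exact hyx ▸ hb
      · exact (mem_sdiff.1 (h (mem_sdiff.2 ⟨hy, by simpa using hyx⟩))).1,
    sdiff_subset_sdiff_left _⟩
  simp only [IsNestSet, IsNestPoint, hne]
  exact forall₄_congr fun a _ b _ => imp_congr_right fun hxa => imp_congr_right fun hxb => by
    rw [hsdiff hxa, hsdiff hxb]

/-- A node `y ∈ g 0 ∩ S` missing from `g 1` closes a β-cycle: with the path up to the next
edge containing `y` if there is one, and otherwise with the whole path followed by `S`. -/
theorem IsBetaPath.inter_zero_subset_one (hA : BetaAcyclic (insert S E)) {n : ℕ}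
    {g : ℕ → Finset V} {w : ℕ → V} {t : V} (hp : IsBetaPath n g w) (hn : 1 ≤ n)
    (hE : ∀ i ≤ n, g i ∈ E) (hwS : ∀ i, 0 < i → i ≤ n → w i ∉ S) (htS : t ∈ S)
    (ht : ∀ j ≤ n, t ∈ g j ↔ j = n) : g 0 ∩ S ⊆ g 1 := by
  intro y hy
  obtain ⟨hy0, hyS⟩ := mem_inter.1 hy
  by_contra hy1
  by_cases hex : ∃ j, 0 < j ∧ j ≤ n ∧ y ∈ g j
  · classical
    obtain ⟨hj0, hjn, hyj⟩ := Nat.find_spec hex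
    have hj1 : 2 ≤ Nat.find hex := by
      by_contra hlt
      exact hy1 (by rwa [show Nat.find hex = 1 by omega] at hyj)
    refine not_betaAcyclic_of_isBetaPath (x := y) (hp.mono hjn) hj1
      (fun i hi => hE i (hi.trans hjn)) (fun i hi => ⟨fun hyi => ?_, ?_⟩)
      (hA.mono (subset_insert _ _))
    · rcases Nat.eq_zero_or_pos i with rfl | hi0
      · exact Or.inl rfl
      · have := Nat.find_min' hex ⟨hi0, hi.trans hjn, hyi⟩
        omega
    · rintro (rfl | rfl) <;> assumption
  · push Not at hex
    refine not_betaAcyclic_of_isBetaPath (x := y) (hp.snoc ht htS hwS) (by omega) (fun i _ => ?_)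
      (fun j hj => ?_) hA
    · split_ifs
      · exact mem_insert_of_mem (hE i (by assumption))
      · exact mem_insert_self S E
    · split_ifs with hjn
      · rcases Nat.eq_zero_or_pos j with rfl | hj0
        · simp [hy0]
        · simp only [hex j hj0 hjn, false_iff]
          omega
      · simp only [hyS, true_iff]
        omega

/-- By `inter_zero_subset_one`, the trace on `S` of every edge along the path contains `T`; the
last one also contains `t ∉ T`, so it would be strictly larger. -/
theorem IsBetaPath.not_subset_inter_zero (hA : BetaAcyclic (insert S E))
    (hmax : ∀ g ∈ E, ¬ g ⊆ S → ¬ T ⊂ g ∩ S) {n : ℕ} {g : ℕ → Finset V} {w : ℕ → V} {t : V}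
    (hp : IsBetaPath (n + 1) g w) (hE : ∀ i ≤ n + 1, g i ∈ E)
    (hwS : ∀ i, 0 < i → i ≤ n + 1 → w i ∉ S) (htS : t ∈ S)
    (ht : ∀ j ≤ n + 1, t ∈ g j ↔ j = n + 1) : ¬ T ⊆ g 0 ∩ S := by
  intro hT
  have hT1 : T ⊆ g 1 ∩ S := fun y hy => mem_inter.2
    ⟨hp.inter_zero_subset_one hA (by omega) hE hwS htS ht (hT hy), (mem_inter.1 (hT hy)).2⟩
  cases n with
  | zero =>
    refine hmax (g 1) (hE 1 le_rfl) (fun h1S => hwS 1 one_pos le_rfl (h1S ?_))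
      (ssubset_of_subset_not_subset hT1 fun h => ?_)
    · exact (hp 1 one_pos le_rfl 1 le_rfl).2 (Or.inl rfl)
    · have htT := h (mem_inter.2 ⟨(ht 1 le_rfl).2 rfl, htS⟩)
      exact absurd ((ht 0 (by omega)).1 (mem_inter.1 (hT htT)).1) (by omega)
  | succ n =>
    exact hp.tail.not_subset_inter_zero hA hmax (fun i hi => hE (i + 1) (by omega))
      (fun i hi hin => hwS (i + 1) (by omega) (by omega)) htS
      (fun j hj => by rw [ht (j + 1) (by omega)]; omega) hT1

open Fin.NatCast in
theorem not_isBetaCycle_insert_union_of_mem_sdiff (hA : BetaAcyclic (insert S E))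
    (hf : f ∈ E) (hmax : ∀ g ∈ E, ¬ g ⊆ S → ¬ f ∩ S ⊂ g ∩ S) (h0 : e 0 = S ∪ f)
    (hv1 : v 1 ∈ f \ S) (hv0 : v 0 ∈ S \ f) : ¬ IsBetaCycle (insert (S ∪ f) E) l v e := by
  intro hc
  obtain ⟨hp, hx⟩ := hc.isBetaPath
  have hE : ∀ i, 0 < i → i ≤ l + 2 → e i ∈ E := fun i hi hil =>
    hc.mem_of_insert_of_eq_zero h0 fun h0i => by
      have := Nat.eq_zero_of_dvd_of_lt (Fin.natCast_eq_zero.1 h0i) (by omega)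
      omega
  have hwS : ∀ i, 0 < i → i ≤ l + 2 → v i ∉ S := fun i hi hil hvi => by
    rcases eq_or_lt_of_le (Nat.succ_le_of_lt hi) with rfl | hi2
    · exact (mem_sdiff.1 hv1).2 (by simpa using hvi)
    · have := (hp i hi hil 0 (by omega)).1 (by simpa [h0] using mem_union_left f hvi)
      omega
  refine (hp.update_zero (f := f) (by simp [h0]) (by simpa using (mem_sdiff.1 hv1).1))
    |>.not_subset_inter_zero (n := l + 1) hA hmax (fun i hi => ?_) hwS (mem_sdiff.1 hv0).1
      (fun j hj => ?_) (by simp)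
  · rcases Nat.eq_zero_or_pos i with rfl | hi0
    · simpa using hf
    · rw [Function.update_of_ne hi0.ne']
      exact hE i hi0 hi
  · rcases Nat.eq_zero_or_pos j with rfl | hj0
    · simpa using (mem_sdiff.1 hv0).2
    · rw [Function.update_of_ne hj0.ne', hx j hj]
      omega

theorem not_isBetaCycle_insert_union (hA : BetaAcyclic (insert S E)) (hf : f ∈ E)
    (hmax : ∀ g ∈ E, ¬ g ⊆ S → ¬ f ∩ S ⊂ g ∩ S) (h0 : e 0 = S ∪ f) :
    ¬ IsBetaCycle (insert (S ∪ f) E) l v e := by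
  intro hc
  have hupdate : ∀ T ∈ insert S E, ∀ i, Function.update e 0 T i ∈ insert S E := by
    intro T hT i
    rcases eq_or_ne i 0 with rfl | hi
    · simpa using hT
    · rw [Function.update_of_ne hi]
      exact mem_insert_of_mem (hc.mem_of_insert_of_eq_zero h0 hi)
  have hv0 : v 0 ∈ S ∪ f := h0 ▸ hc.mem_self 0
  have hv1 : v 1 ∈ S ∪ f := h0 ▸ by simpa using hc.mem_succ 0
  by_cases hS : v 0 ∈ S ∧ v 1 ∈ S
  · exact hA ⟨l, v, _, hc.update_zero (h0 ▸ subset_union_left) hS.1 hS.2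
      (hupdate S (mem_insert_self S E))⟩
  by_cases hF : v 0 ∈ f ∧ v 1 ∈ f
  · exact hA ⟨l, v, _, hc.update_zero (h0 ▸ subset_union_right) hF.1 hF.2
      (hupdate f (mem_insert_of_mem hf))⟩
  simp only [mem_union] at hv0 hv1
  rcases show (v 1 ∈ f \ S ∧ v 0 ∈ S \ f) ∨ (v 0 ∈ f \ S ∧ v 1 ∈ S \ f) by
    simp only [mem_sdiff]; tauto with ⟨h1, h0'⟩ | ⟨h0', h1⟩
  · exact not_isBetaCycle_insert_union_of_mem_sdiff hA hf hmax h0 h1 h0' hc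
  · exact not_isBetaCycle_insert_union_of_mem_sdiff hA hf hmax (by simpa using h0)
      (by simpa using h0') (by simpa using h1) hc.reflect

/-- A β-cycle through `S ∪ f` enters and leaves it either both in `S` or both in `f`, and then
`S` or `f` can take its place, or once in `f \ S` and once in `S \ f`, which the maximality of the
trace of `f` excludes. -/
theorem BetaAcyclic.insert_union (hA : BetaAcyclic (insert S E)) (hf : f ∈ E)
    (hmax : ∀ g ∈ E, ¬ g ⊆ S → ¬ f ∩ S ⊂ g ∩ S) : BetaAcyclic (insert (S ∪ f) E) := by
  rintro ⟨l, v, e, hc⟩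
  by_cases hslot : ∃ k, e k = S ∪ f
  · obtain ⟨k, hk⟩ := hslot
    exact not_isBetaCycle_insert_union hA hf hmax (by simpa using hk) (hc.rotate k)
  · push Not at hslot
    exact hA ⟨l, v, e, hc.of_mem fun i => mem_insert_of_mem (hc.mem_of_insert (hslot i))⟩

theorem IsNestPoint.of_erase {x : V} (hx : IsNestPoint (E.erase f) x)
    (hf : ∀ c ∈ E, x ∈ c → c ⊆ f) : IsNestPoint E x := by
  intro a ha b hb hxa hxb
  by_cases haf : a = f
  · exact Or.inr (haf ▸ hf b hb hxb)
  by_cases hbf : b = f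
  · exact Or.inl (hbf ▸ hf a ha hxa)
  exact hx a (mem_erase.2 ⟨haf, ha⟩) b (mem_erase.2 ⟨hbf, hb⟩) hxa hxb

/-- A node `p ∈ c \ f` lies in `S`, so either `f ∩ S ⊆ c` and the trace of `c` is larger than
that of `f`, or some `r ∈ f ∩ S \ c` gives the triangle `z, f, r, S, p, c`. -/
theorem subset_of_sdiff_subset (hA : BetaAcyclic (insert S E)) (hf : f ∈ E)
    (hmax : ∀ g ∈ E, ¬ g ⊆ S → ¬ f ∩ S ⊂ g ∩ S) {c : Finset V} (hc : c ∈ E) {z : V}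
    (hzc : z ∈ c) (hzS : z ∉ S) (hcf : c \ S ⊆ f) : c ⊆ f := by
  intro p hpc
  by_contra hpf
  have hpS : p ∈ S := by_contra fun hpS => hpf (hcf (mem_sdiff.2 ⟨hpc, hpS⟩))
  by_cases hfc : f ∩ S ⊆ c
  · refine hmax c hc (fun hcS => hzS (hcS hzc)) (ssubset_of_subset_not_subset
      (fun y hy => mem_inter.2 ⟨hfc hy, (mem_inter.1 hy).2⟩) fun h => ?_)
    exact hpf (mem_inter.1 (h (mem_inter.2 ⟨hpc, hpS⟩))).1
  · obtain ⟨r, hr, hrc⟩ := not_subset.1 hfc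
    exact not_betaAcyclic_of_triangle (mem_insert_of_mem hc) (mem_insert_of_mem hf)
      (mem_insert_self S E) hzc (hcf (mem_sdiff.2 ⟨hzc, hzS⟩)) hzS (mem_inter.1 hr).1
      (mem_inter.1 hr).2 hrc hpS hpc hpf hA

/-- Induction on the nodes outside `S` and the edges: an edge `f ⊄ S` with maximal trace on `S`
is added to `S`, unless `f` contains all nodes outside `S`; then `f` is deleted, and by
`subset_of_sdiff_subset` every edge through the nest point found lies in `f`. -/
theorem exists_isNestPoint_mem_sdiff {E : Finset (Finset V)} {Vs S : Finset V}
    (hEV : ∀ e ∈ E, e ⊆ Vs) (hA : BetaAcyclic (insert S E)) (hne : (Vs \ S).Nonempty) :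
    ∃ z ∈ Vs \ S, IsNestPoint E z := by
  by_cases hin : ∀ e ∈ E, e ⊆ S
  · obtain ⟨z, hz⟩ := hne
    exact ⟨z, hz, fun a ha _ _ hza _ => absurd (hin a ha hza) (mem_sdiff.1 hz).2⟩
  push Not at hin
  obtain ⟨f, hf, hfmax⟩ := exists_max_image (E.filter (¬ · ⊆ S)) (fun g => (g ∩ S).card)
    (by simpa [Finset.Nonempty] using hin)
  obtain ⟨hfE, hfS⟩ := mem_filter.1 hf
  have hmax : ∀ g ∈ E, ¬ g ⊆ S → ¬ f ∩ S ⊂ g ∩ S := fun g hg hgS hlt =>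
    (card_lt_card hlt).not_ge (hfmax g (mem_filter.2 ⟨hg, hgS⟩))
  by_cases hout : (Vs \ (S ∪ f)).Nonempty
  · have : (Vs \ (S ∪ f)).card < (Vs \ S).card := by
      obtain ⟨p, hpf, hpS⟩ := not_subset.1 hfS
      refine card_lt_card ⟨sdiff_subset_sdiff le_rfl subset_union_left, fun h => ?_⟩
      simpa [hpf] using h (mem_sdiff.2 ⟨hEV f hfE hpf, hpS⟩)
    obtain ⟨z, hz, hzE⟩ := exists_isNestPoint_mem_sdiff hEV (hA.insert_union hfE hmax) hout
    exact ⟨z, sdiff_subset_sdiff le_rfl subset_union_left hz, hzE⟩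
  · have : (E.erase f).card < E.card := card_erase_lt_of_mem hfE
    obtain ⟨z, hz, hzE⟩ := exists_isNestPoint_mem_sdiff (fun e he => hEV e (mem_of_mem_erase he))
      (hA.mono (insert_subset_insert S (erase_subset f E))) hne
    refine ⟨z, hz, hzE.of_erase fun c hc hzc => subset_of_sdiff_subset hA hfE hmax hc hzc
      (mem_sdiff.1 hz).2 fun p hp => ?_⟩
    by_contra hpf
    exact hout ⟨p, by simp [hEV c hc (mem_sdiff.1 hp).1, (mem_sdiff.1 hp).2, hpf]⟩
termination_by (Vs \ S).card + E.card

theorem BetaAcyclic.insert_empty (hA : BetaAcyclic E) : BetaAcyclic (insert ∅ E) :=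
  fun ⟨l, v, e, hc⟩ => hA ⟨l, v, e, hc.of_mem fun i =>
    hc.mem_of_insert fun h => by simpa [h] using hc.mem_self i⟩

theorem exists_isNestPoint {Vs : Finset V} (hEV : ∀ e ∈ E, e ⊆ Vs) (hA : BetaAcyclic E)
    (hne : Vs.Nonempty) : ∃ z ∈ Vs, IsNestPoint E z := by
  simpa using exists_isNestPoint_mem_sdiff hEV hA.insert_empty (S := ∅) (by simpa using hne)

theorem mem_foldr_union {L : List (Finset V)} {x : V} :
    x ∈ L.foldr (· ∪ ·) ∅ ↔ ∃ M ∈ L, x ∈ M := by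
  induction L with
  | nil => simp
  | cons M L ih => simp [ih]

theorem isElimOrder_nil {Vs : Finset V} : IsElimOrder Vs E [] ↔ Vs = ∅ := by
  simp [IsElimOrder, eq_comm]

theorem isElimOrder_cons {Vs N : Finset V} {L : List (Finset V)} :
    IsElimOrder Vs E (N :: L) ↔
      N.Nonempty ∧ N ⊆ Vs ∧ IsNestSet E N ∧ IsElimOrder (Vs \ N) (hreduce E N) L := by
  have hnest : (∀ i : Fin (N :: L).length,
      IsNestSet (((N :: L).take i).foldl hreduce E) ((N :: L).get i)) ↔
      IsNestSet E N ∧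
        ∀ i : Fin L.length, IsNestSet ((L.take i).foldl hreduce (hreduce E N)) (L.get i) :=
    Fin.forall_fin_succ
  simp only [IsElimOrder, List.pairwise_cons, List.mem_cons, forall_eq_or_imp, List.foldr_cons,
    hnest]
  constructor
  · rintro ⟨⟨hdisj, hpw⟩, ⟨hN, hne⟩, hU, hN0, hnestL⟩
    refine ⟨hN, hU ▸ subset_union_left, hN0, hpw, hne, ?_, hnestL⟩
    ext x
    rw [mem_sdiff, ← hU, mem_union, mem_foldr_union]
    constructor
    · rintro ⟨M, hM, hxM⟩
      exact ⟨Or.inr ⟨M, hM, hxM⟩, fun hxN => disjoint_left.1 (hdisj M hM) hxN hxM⟩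
    · rintro ⟨hx | hx, hxN⟩
      · exact absurd hx hxN
      · exact hx
  · rintro ⟨hN, hNV, hN0, hpw, hne, hU, hnestL⟩
    refine ⟨⟨fun M hM => ?_, hpw⟩, ⟨hN, hne⟩, ?_, hN0, hnestL⟩
    · exact disjoint_left.2 fun x hxN hxM =>
        (mem_sdiff.1 (hU ▸ mem_foldr_union.2 ⟨M, hM, hxM⟩)).2 hxN
    · rw [hU, union_sdiff_of_subset hNV]

theorem betaAcyclic_of_isElimOrder {Vs : Finset V} {L : List (Finset V)}
    (hEV : ∀ e ∈ E, e ⊆ Vs) (hL : IsElimOrder Vs E L) (h1 : ∀ N ∈ L, N.card = 1) :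
    BetaAcyclic E := by
  induction L generalizing Vs E with
  | nil =>
    obtain rfl := isElimOrder_nil.1 hL
    rintro ⟨l, v, e, hc⟩
    exact notMem_empty _ (hEV _ (hc.mem 0) (hc.mem_self 0))
  | cons N L ih =>
    obtain ⟨-, -, hN, hL⟩ := isElimOrder_cons.1 hL
    obtain ⟨x, rfl⟩ := card_eq_one.1 (h1 N List.mem_cons_self)
    exact (isNestSet_singleton_iff.1 hN).betaAcyclic_of_hreduce
      (ih (subset_sdiff_of_mem_hreduce hEV) hL fun M hM => h1 M (List.mem_cons_of_mem _ hM))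

theorem exists_isElimOrder_of_betaAcyclic {E : Finset (Finset V)} {Vs : Finset V}
    (hEV : ∀ e ∈ E, e ⊆ Vs) (hA : BetaAcyclic E) :
    ∃ L, IsElimOrder Vs E L ∧ ∀ N ∈ L, N.card = 1 := by
  rcases Vs.eq_empty_or_nonempty with rfl | hne
  · exact ⟨[], isElimOrder_nil.2 rfl, by simp⟩
  obtain ⟨z, hz, hzE⟩ := exists_isNestPoint hEV hA hne
  have : (Vs \ {z}).card < Vs.card :=
    card_lt_card (sdiff_ssubset (singleton_subset_iff.2 hz) (singleton_nonempty z))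
  obtain ⟨L, hL, h1⟩ :=
    exists_isElimOrder_of_betaAcyclic (subset_sdiff_of_mem_hreduce hEV) (hA.hreduce {z})
  refine ⟨{z} :: L, isElimOrder_cons.2 ⟨singleton_nonempty z, singleton_subset_iff.2 hz,
    isNestSet_singleton_iff.2 hzE, hL⟩, ?_⟩
  simpa using h1
termination_by Vs.card

theorem betaAcyclic_iff_exists_isElimOrder {Vs : Finset V} (hEV : ∀ e ∈ E, e ⊆ Vs) :
    BetaAcyclic E ↔ ∃ L, IsElimOrder Vs E L ∧ ∀ N ∈ L, N.card = 1 :=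
  ⟨exists_isElimOrder_of_betaAcyclic hEV, fun ⟨_, hL, h1⟩ => betaAcyclic_of_isElimOrder hEV hL h1⟩

end

theorem stmt_8_general {V : Type*} [Fintype V] [DecidableEq V] (E : Finset (Finset V)) :
    BetaAcyclic E ↔
      ∃ L : List (Finset V), IsElimOrder Finset.univ E L ∧ ∀ N ∈ L, N.card = 1 := by
  exact betaAcyclic_iff_exists_isElimOrder fun e _ => Finset.subset_univ e

/-- A hypergraph `G` is β-acyclic if and only if `nsw(G) = 1`, i.e. iff it admits a
nest-set elimination order all of whose elements are singletons. -/
theorem stmt_8 {V : Type*} [Fintype V] [DecidableEq V] (E : Finset (Finset V))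
    (hE : ∀ e ∈ E, 2 ≤ e.card) :
    BetaAcyclic E ↔
      ∃ L : List (Finset V), IsElimOrder Finset.univ E L ∧ ∀ N ∈ L, N.card = 1 :=
  stmt_8_general E
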